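/- In the setup of the modified recurrence step, after the successful parity projection and applying the CNOT from d1 to d2, the normalized post-measurement state on r1,d1 equals (1 - q/2)|φ⟩⟨φ| + (q/2) (I⊗Z)|φ⟩⟨φ|(I⊗Z), where |φ⟩ = (|00⟩+|11⟩)/√2 and q = 4p(1-p); in particular the state is independent of the damping parameter g. -/

import Mathlib

/-!
All Kraus operators `O_i` are upper triangular, so once the odd-parity branch is selected
only their diagonal entries survive: the pair `(O_i, O_j)` leaves `r, d1, d2` in
`(O_i₀₀ O_j₁₁ |00⟩ + O_i₁₁ O_j₀₀ |11⟩)/√2 ⊗ |1⟩`. Summing the projectors onto these vectors, every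
entry factors into two sums over a single Kraus index, `∑ i, O_i,rr * conj O_i,ss`, which equal
`1`, `1 - g` and `(1 - 2p)√(1 - g)`. Hence the state is `(1 - g)` times the target, since
`1 - q = (1 - 2p)²`.
-/

open Matrix Kronecker

/-- The three Kraus operators of the damping-dephasing channel. -/
noncomputable def Ops (p g : ℝ) : Fin 3 → Matrix (Fin 2) (Fin 2) ℂ :=
  ![!![(Real.sqrt (1 - p) : ℂ), 0;
      0, (Real.sqrt (1 - p) : ℂ) * (Real.sqrt (1 - g) : ℂ)],
    !![0, (Real.sqrt g : ℂ); 0, 0],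
    !![(Real.sqrt p : ℂ), 0;
      0, -((Real.sqrt p : ℂ) * (Real.sqrt (1 - g) : ℂ))]]

/-- Pauli `X` matrix. -/
def PauliX : Matrix (Fin 2) (Fin 2) ℂ := !![0, 1; 1, 0]

/-- Pauli `Z` matrix. -/
def PauliZ : Matrix (Fin 2) (Fin 2) ℂ := !![1, 0; 0, -1]

/-- The state vector `|ψ₁⟩ = (|0⟩|01⟩ + |1⟩|10⟩)/√2` on `r ⊗ a1 ⊗ a2`. -/
noncomputable def psi1 : Fin 2 × Fin 2 × Fin 2 → ℂ := fun x =>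
  if x = ((0 : Fin 2), (0 : Fin 2), (1 : Fin 2)) then ((Real.sqrt 2 : ℝ) : ℂ)⁻¹
  else if x = ((1 : Fin 2), (1 : Fin 2), (0 : Fin 2)) then ((Real.sqrt 2 : ℝ) : ℂ)⁻¹
  else 0

/-- The density operator `|ψ₁⟩⟨ψ₁|`. -/
noncomputable def psi1Op : Matrix (Fin 2 × Fin 2 × Fin 2) (Fin 2 × Fin 2 × Fin 2) ℂ :=
  Matrix.of fun a b => psi1 a * (starRingEnd ℂ) (psi1 b)

/-- Kraus operator `I ⊗ O_i ⊗ O_j` of `id ⊗ F ⊗ F`. -/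
noncomputable def Kop (p g : ℝ) (i j : Fin 3) :
    Matrix (Fin 2 × Fin 2 × Fin 2) (Fin 2 × Fin 2 × Fin 2) ℂ :=
  (1 : Matrix (Fin 2) (Fin 2) ℂ) ⊗ₖ (Ops p g i ⊗ₖ Ops p g j)

/-- The state after sending `a1, a2` through `F ⊗ F`. -/
noncomputable def psi2 (p g : ℝ) :
    Matrix (Fin 2 × Fin 2 × Fin 2) (Fin 2 × Fin 2 × Fin 2) ℂ :=
  ∑ i : Fin 3, ∑ j : Fin 3, Kop p g i j * psi1Op * (Kop p g i j)ᴴ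

/-- The parity projector `Π = (I - Z_{d1} Z_{d2})/2` on `d1, d2`. -/
noncomputable def parityProj :
    Matrix (Fin 2 × Fin 2 × Fin 2) (Fin 2 × Fin 2 × Fin 2) ℂ :=
  (2 : ℂ)⁻¹ • ((1 : Matrix (Fin 2 × Fin 2 × Fin 2) (Fin 2 × Fin 2 × Fin 2) ℂ) -
    (1 : Matrix (Fin 2) (Fin 2) ℂ) ⊗ₖ (PauliZ ⊗ₖ PauliZ))

/-- The CNOT `|0⟩⟨0| ⊗ I + |1⟩⟨1| ⊗ X` from `d1` to `d2`, extended by the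
identity on `r`. -/
def cnotD1D2 : Matrix (Fin 2 × Fin 2 × Fin 2) (Fin 2 × Fin 2 × Fin 2) ℂ :=
  (1 : Matrix (Fin 2) (Fin 2) ℂ) ⊗ₖ
    ((!![1, 0; 0, 0] : Matrix (Fin 2) (Fin 2) ℂ) ⊗ₖ (1 : Matrix (Fin 2) (Fin 2) ℂ) +
     (!![0, 0; 0, 1] : Matrix (Fin 2) (Fin 2) ℂ) ⊗ₖ PauliX)

/-- The maximally entangled state vector `|φ⟩ = (|00⟩ + |11⟩)/√2`. -/
noncomputable def phiVec : Fin 2 × Fin 2 → ℂ := fun x =>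
  if x.1 = x.2 then ((Real.sqrt 2 : ℝ) : ℂ)⁻¹ else 0

/-- The maximally entangled density operator `|φ⟩⟨φ|`. -/
noncomputable def phiOp : Matrix (Fin 2 × Fin 2) (Fin 2 × Fin 2) ℂ :=
  Matrix.of fun a b => phiVec a * (starRingEnd ℂ) (phiVec b)

/-- The target state `(1-q/2)|φ⟩⟨φ| + (q/2)(I⊗Z)|φ⟩⟨φ|(I⊗Z)` on `r1, d1`,
with `q = 4p(1-p)`. -/
noncomputable def targetState (p : ℝ) : Matrix (Fin 2 × Fin 2) (Fin 2 × Fin 2) ℂ :=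
  ((1 - 4 * p * (1 - p) / 2 : ℝ) : ℂ) • phiOp +
  ((4 * p * (1 - p) / 2 : ℝ) : ℂ) •
    (((1 : Matrix (Fin 2) (Fin 2) ℂ) ⊗ₖ PauliZ) * phiOp *
      ((1 : Matrix (Fin 2) (Fin 2) ℂ) ⊗ₖ PauliZ))

lemma ofReal_sqrt_two_inv_mul_self :
    ((Real.sqrt 2 : ℝ) : ℂ)⁻¹ * ((Real.sqrt 2 : ℝ) : ℂ)⁻¹ = 2⁻¹ := by
  rw [← mul_inv, ← Complex.ofReal_mul, Real.mul_self_sqrt zero_le_two, Complex.ofReal_ofNat]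

theorem Matrix.mul_vecMulVec_star_mul_conjTranspose {m n α : Type*} [Fintype n]
    [CommSemiring α] [StarRing α] (A : Matrix m n α) (v : n → α) :
    A * vecMulVec v (star v) * Aᴴ = vecMulVec (A *ᵥ v) (star (A *ᵥ v)) := by
  rw [mul_vecMulVec, vecMulVec_mul, star_mulVec]

lemma psi1Op_eq_vecMulVec : psi1Op = vecMulVec psi1 (star psi1) := rfl

lemma conjTranspose_PauliZ : PauliZᴴ = PauliZ := by
  ext i j
  fin_cases i <;> fin_cases j <;> simp [PauliZ]

lemma conjTranspose_parityProj : parityProjᴴ = parityProj := by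
  simp [parityProj, conjTranspose_kronecker, conjTranspose_PauliZ]

lemma parityProj_mulVec (v : Fin 2 × Fin 2 × Fin 2 → ℂ) :
    parityProj *ᵥ v = fun x => if x.2.1 = x.2.2 then 0 else v x := by
  funext ⟨r, c, t⟩
  fin_cases r <;> fin_cases c <;> fin_cases t <;>
    simp [parityProj, PauliZ, mulVec, dotProduct, Fintype.sum_prod_type] <;> ring

lemma cnotD1D2_mulVec (v : Fin 2 × Fin 2 × Fin 2 → ℂ) :
    cnotD1D2 *ᵥ v = fun x => v (x.1, x.2.1, x.2.2 + x.2.1) := by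
  funext ⟨r, c, t⟩
  fin_cases r <;> fin_cases c <;> fin_cases t <;>
    simp [cnotD1D2, PauliX, mulVec, dotProduct, Fintype.sum_prod_type]

lemma kronecker_mulVec_psi1 (A B : Matrix (Fin 2) (Fin 2) ℂ) :
    ((1 : Matrix (Fin 2) (Fin 2) ℂ) ⊗ₖ (A ⊗ₖ B)) *ᵥ psi1 =
      fun x => ((Real.sqrt 2 : ℝ) : ℂ)⁻¹ * (A x.2.1 x.1 * B x.2.2 (x.1 + 1)) := by
  funext ⟨r, c, t⟩
  fin_cases r <;>
    simp [psi1, mulVec, dotProduct, Fintype.sum_prod_type] <;> ring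

/-- The branch of the Kraus pair `(A, B)` that survives the parity measurement and the CNOT,
when `A` and `B` are upper triangular. -/
noncomputable def branchVec (A B : Matrix (Fin 2) (Fin 2) ℂ) (x : Fin 2 × Fin 2 × Fin 2) :
    ℂ :=
  if x.1 = x.2.1 ∧ x.2.2 = 1 then
    ((Real.sqrt 2 : ℝ) : ℂ)⁻¹ * (A x.1 x.1 * B (x.1 + 1) (x.1 + 1))
  else 0

lemma cnotD1D2_mul_parityProj_mul_kronecker_mulVec_psi1 (A B : Matrix (Fin 2) (Fin 2) ℂ)
    (hA : A 1 0 = 0) (hB : B 1 0 = 0) :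
    (cnotD1D2 * parityProj * ((1 : Matrix (Fin 2) (Fin 2) ℂ) ⊗ₖ (A ⊗ₖ B))) *ᵥ psi1 =
      branchVec A B := by
  rw [← mulVec_mulVec, ← mulVec_mulVec, kronecker_mulVec_psi1, parityProj_mulVec,
    cnotD1D2_mulVec]
  funext ⟨r, c, t⟩
  fin_cases r <;> fin_cases c <;> fin_cases t <;> simp [branchVec, hA, hB]

lemma Ops_apply_one_zero (p g : ℝ) (i : Fin 3) : Ops p g i 1 0 = 0 := by
  fin_cases i <;> simp [Ops]

lemma cnotD1D2_parityProj_psi2_eq_sum_vecMulVec (p g : ℝ) :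
    cnotD1D2 * parityProj * psi2 p g * parityProj * cnotD1D2ᴴ =
      ∑ i, ∑ j, vecMulVec (branchVec (Ops p g i) (Ops p g j))
        (star (branchVec (Ops p g i) (Ops p g j))) := by
  simp only [psi2, Finset.mul_sum, Finset.sum_mul]
  refine Finset.sum_congr rfl fun i _ => Finset.sum_congr rfl fun j _ => ?_
  rw [← cnotD1D2_mul_parityProj_mul_kronecker_mulVec_psi1 _ _ (Ops_apply_one_zero p g i)
    (Ops_apply_one_zero p g j), ← mul_vecMulVec_star_mul_conjTranspose, ← psi1Op_eq_vecMulVec,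
    conjTranspose_mul, conjTranspose_mul, conjTranspose_parityProj, Kop]
  simp only [Matrix.mul_assoc]

/-- The factor by which the diagonal parts of the Kraus operators `O i` scale the entry `|r⟩⟨s|`
of a density matrix. -/
def coherence {ι : Type*} [Fintype ι] (O : ι → Matrix (Fin 2) (Fin 2) ℂ) :
    Matrix (Fin 2) (Fin 2) ℂ :=
  Matrix.of fun r s => ∑ i, O i r r * star (O i s s)

lemma sum_vecMulVec_branchVec_apply {ι : Type*} [Fintype ι]
    (O : ι → Matrix (Fin 2) (Fin 2) ℂ) (a b : Fin 2 × Fin 2 × Fin 2) :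
    (∑ i, ∑ j, vecMulVec (branchVec (O i) (O j)) (star (branchVec (O i) (O j)))) a b =
      if (a.1 = a.2.1 ∧ a.2.2 = 1) ∧ (b.1 = b.2.1 ∧ b.2.2 = 1) then
        2⁻¹ * (coherence O a.1 b.1 * coherence O (a.1 + 1) (b.1 + 1))
      else 0 := by
  simp only [Matrix.sum_apply, vecMulVec_apply, Pi.star_apply, branchVec]
  by_cases h : (a.1 = a.2.1 ∧ a.2.2 = 1) ∧ (b.1 = b.2.1 ∧ b.2.2 = 1)
  · simp only [if_pos h, if_pos h.1, if_pos h.2, coherence, of_apply]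
    rw [Finset.sum_mul_sum, Finset.mul_sum]
    refine Finset.sum_congr rfl fun i _ => ?_
    rw [Finset.mul_sum]
    refine Finset.sum_congr rfl fun j _ => ?_
    rw [star_mul, star_mul, star_inv₀,
      show star ((Real.sqrt 2 : ℝ) : ℂ) = (Real.sqrt 2 : ℝ) from Complex.conj_ofReal _]
    linear_combination (O i a.1 a.1 * O j (a.1 + 1) (a.1 + 1) *
      star (O j (b.1 + 1) (b.1 + 1)) * star (O i b.1 b.1)) * ofReal_sqrt_two_inv_mul_self
  · rw [if_neg h]
    rcases not_and_or.mp h with ha | hb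
    · simp [ha]
    · simp [hb]

lemma coherence_Ops {p g : ℝ} (hp0 : 0 ≤ p) (hp1 : p ≤ 1) (hg : g ≤ 1) :
    coherence (Ops p g) =
      !![1, (((1 - 2 * p) * Real.sqrt (1 - g) : ℝ) : ℂ);
        (((1 - 2 * p) * Real.sqrt (1 - g) : ℝ) : ℂ), ((1 - g : ℝ) : ℂ)] := by
  have hsq {x : ℝ} (hx : 0 ≤ x) : ((Real.sqrt x : ℝ) : ℂ) * (Real.sqrt x : ℝ) = x := by
    rw [← Complex.ofReal_mul, Real.mul_self_sqrt hx]
  have hp := hsq hp0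
  have hq := hsq (sub_nonneg.2 hp1)
  have hr := hsq (sub_nonneg.2 hg)
  push_cast at hq hr ⊢
  ext r s
  fin_cases r <;> fin_cases s <;>
    simp [coherence, Ops, Fin.sum_univ_three, Complex.conj_ofReal]
  · linear_combination hq + hp
  · linear_combination (Real.sqrt (1 - g) : ℂ) * (hq - hp)
  · linear_combination (Real.sqrt (1 - g) : ℂ) * (hq - hp)
  · linear_combination ((Real.sqrt (1 - g) : ℂ) * (Real.sqrt (1 - g) : ℂ)) * (hq + hp) + hr

lemma targetState_apply (p : ℝ) (x y : Fin 2 × Fin 2) :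
    targetState p x y =
      if x.1 = x.2 ∧ y.1 = y.2 then
        if x.1 = y.1 then 2⁻¹ else (((1 - 2 * p) ^ 2 / 2 : ℝ) : ℂ)
      else 0 := by
  obtain ⟨r, c⟩ := x
  obtain ⟨r', c'⟩ := y
  fin_cases r <;> fin_cases c <;> fin_cases r' <;> fin_cases c' <;>
    simp [targetState, phiOp, phiVec, PauliZ, mul_apply, Fintype.sum_prod_type,
      ofReal_sqrt_two_inv_mul_self] <;> ring

theorem post_measurement_state (p g : ℝ)
    (hp : p ∈ Set.Icc (0 : ℝ) (1/2)) (hg : g ∈ Set.Ico (0 : ℝ) 1) :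
    ((1 - g : ℝ) : ℂ)⁻¹ •
        (cnotD1D2 * parityProj * psi2 p g * parityProj * cnotD1D2ᴴ) =
      Matrix.of (fun a b : Fin 2 × Fin 2 × Fin 2 =>
        targetState p (a.1, a.2.1) (b.1, b.2.1) *
          (!![0, 0; 0, 1] : Matrix (Fin 2) (Fin 2) ℂ) a.2.2 b.2.2) := by
  obtain ⟨hp0, hp1⟩ := hp
  have hg1 : (1 - g : ℂ) ≠ 0 := by exact_mod_cast (sub_pos.2 hg.2).ne'
  have hsqrt : ((Real.sqrt (1 - g) : ℝ) : ℂ) * (Real.sqrt (1 - g) : ℝ) = 1 - g := by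
    rw [← Complex.ofReal_mul, Real.mul_self_sqrt (sub_pos.2 hg.2).le]
    push_cast; rfl
  ext ⟨r, c, t⟩ ⟨r', c', t'⟩
  rw [Matrix.smul_apply, cnotD1D2_parityProj_psi2_eq_sum_vecMulVec,
    sum_vecMulVec_branchVec_apply, coherence_Ops hp0 (by linarith) hg.2.le]
  simp only [of_apply, targetState_apply]
  by_cases h : (r = c ∧ t = 1) ∧ (r' = c' ∧ t' = 1)
  · obtain ⟨⟨rfl, rfl⟩, rfl, rfl⟩ := h
    fin_cases r <;> fin_cases r' <;> simp
    all_goals field_simp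
    all_goals linear_combination (1 - 2 * (p : ℂ)) ^ 2 * hsqrt
  · rw [if_neg h]
    fin_cases t <;> fin_cases t' <;> simp_all
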